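/- For all real a > 0 and b ∈ ℝ, an antiderivative of x ↦ Φ(a√x + b/√x) on (0,∞) is given by G(x) = (1/(2a²))·e^{−a|b| − ab}·(−a|b| + ab − 1)·Φ(a√x − |b|/√x) + (1/(2a²))·e^{a|b| − ab}·(a|b| + ab − 1)·(Φ(a√x + |b|/√x) − 1) + (|b|/(2a))·e^{−a|b| − ab} + x·Φ(a√x + b/√x) + (√x/(a√(2π)))·e^{−(a√x + b/√x)²/2}. -/

import Mathlib

/-!
Differentiate term by term. Since `(a s + c / s) ^ 2 = a ^ 2 s ^ 2 + c ^ 2 / s ^ 2 + 2 a c`, the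
Gaussian density at `a s + c / s` depends on `c` only through `c ^ 2` and a factor `exp (-a c)`.
Hence the densities at `a√x ∓ |b|/√x` are `exp`-multiples of the density at `a√x + b/√x`, the
exponential prefactors of the first two terms cancel them, and everything except
`Φ(a√x + b/√x)` collapses by an algebraic identity using `|b| ^ 2 = b ^ 2`.
-/

open MeasureTheory Real

/-- Standard normal cumulative distribution function. -/
noncomputable def Phi (x : ℝ) : ℝ :=
  ∫ u in Set.Iic x, Real.exp (-u ^ 2 / 2) / Real.sqrt (2 * Real.pi)

theorem hasDerivAt_integral_Iic {E : Type*} [NormedAddCommGroup E] [NormedSpace ℝ E]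
    [CompleteSpace E] {f : ℝ → E} (hf : Integrable f) (hc : Continuous f) (y : ℝ) :
    HasDerivAt (fun x => ∫ u in Set.Iic x, f u) (f y) y := by
  have hsplit : ∀ x, ∫ u in Set.Iic x, f u = (∫ u in Set.Iic 0, f u) + ∫ u in (0 : ℝ)..x, f u :=
    fun x => by rw [← intervalIntegral.integral_Iic_sub_Iic hf.integrableOn hf.integrableOn]; abel
  rw [funext hsplit]
  exact (intervalIntegral.integral_hasDerivAt_right hf.intervalIntegrable
    (hc.stronglyMeasurableAtFilter _ _) hc.continuousAt).const_add _

noncomputable def phi (u : ℝ) : ℝ := exp (-u ^ 2 / 2) / √(2 * π)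

theorem integrable_phi : Integrable phi := by
  have := (integrable_exp_neg_mul_sq (b := 1 / 2) (by norm_num)).div_const √(2 * π)
  convert this using 2 with u
  simp only [phi]
  ring_nf

theorem hasDerivAt_Phi (y : ℝ) : HasDerivAt Phi (phi y) y :=
  hasDerivAt_integral_Iic integrable_phi (by unfold phi; fun_prop) y

theorem hasDerivAt_phi (y : ℝ) : HasDerivAt phi (-y * phi y) y := by
  refine ((((hasDerivAt_pow 2 y).neg.div_const 2).exp).div_const √(2 * π)).congr_deriv ?_
  simp only [phi, Pi.neg_apply]
  push_cast
  ring

theorem hasDerivAt_mul_sqrt_add_div_sqrt (a c : ℝ) {x : ℝ} (hx : 0 < x) :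
    HasDerivAt (fun y => a * √y + c / √y) ((a - c / x) / (2 * √x)) x := by
  have hsqrt := hasDerivAt_sqrt hx.ne'
  refine ((hsqrt.const_mul a).add ((hsqrt.inv (sqrt_pos.2 hx).ne').const_mul c)).congr_deriv ?_
  field_simp
  rw [sq_sqrt hx.le]
  ring

theorem hasDerivAt_Phi_mul_sqrt_add_div_sqrt (a c : ℝ) {x : ℝ} (hx : 0 < x) :
    HasDerivAt (fun y => Phi (a * √y + c / √y))
      (phi (a * √x + c / √x) * ((a - c / x) / (2 * √x))) x :=
  (hasDerivAt_Phi _).comp x (hasDerivAt_mul_sqrt_add_div_sqrt a c hx)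

theorem phi_mul_add_div_eq (a c d : ℝ) {s : ℝ} (hs : s ≠ 0) (hcd : c ^ 2 = d ^ 2) :
    phi (a * s + c / s) = phi (a * s + d / s) * exp (a * (d - c)) := by
  rw [phi, phi, div_mul_eq_mul_div, ← exp_add]
  congr 2
  field_simp
  linear_combination -hcd

theorem phi_mul_sub_abs_div (a b : ℝ) {s : ℝ} (hs : s ≠ 0) :
    phi (a * s - |b| / s) = phi (a * s + b / s) / exp (-(a * |b|) - a * b) := by
  rw [sub_eq_add_neg, ← neg_div, phi_mul_add_div_eq a (-|b|) b hs (by simp),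
    eq_div_iff (exp_pos _).ne', mul_assoc, ← exp_add]
  simp only [show a * (b - -|b|) + (-(a * |b|) - a * b) = 0 by ring, exp_zero, mul_one]

theorem phi_mul_add_abs_div (a b : ℝ) {s : ℝ} (hs : s ≠ 0) :
    phi (a * s + |b| / s) = phi (a * s + b / s) / exp (a * |b| - a * b) := by
  rw [phi_mul_add_div_eq a |b| b hs (by simp), eq_div_iff (exp_pos _).ne', mul_assoc, ← exp_add]
  simp only [show a * (b - |b|) + (a * |b| - a * b) = 0 by ring, exp_zero, mul_one]

theorem stmt_9 (a b : ℝ) (ha : 0 < a) (x : ℝ) (hx : 0 < x) :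
    HasDerivAt (fun x : ℝ =>
        (1 / (2 * a ^ 2)) * Real.exp (-(a * |b|) - a * b) * (-(a * |b|) + a * b - 1) *
            Phi (a * Real.sqrt x - |b| / Real.sqrt x)
          + (1 / (2 * a ^ 2)) * Real.exp (a * |b| - a * b) * (a * |b| + a * b - 1) *
            (Phi (a * Real.sqrt x + |b| / Real.sqrt x) - 1)
          + (|b| / (2 * a)) * Real.exp (-(a * |b|) - a * b)
          + x * Phi (a * Real.sqrt x + b / Real.sqrt x)
          + (Real.sqrt x / (a * Real.sqrt (2 * Real.pi))) *
            Real.exp (-(a * Real.sqrt x + b / Real.sqrt x) ^ 2 / 2))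
      (Phi (a * Real.sqrt x + b / Real.sqrt x)) x := by
  have hv := hasDerivAt_Phi_mul_sqrt_add_div_sqrt a (-|b|) hx
  simp only [neg_div, ← sub_eq_add_neg, sub_neg_eq_add] at hv
  have hw := hasDerivAt_Phi_mul_sqrt_add_div_sqrt a |b| hx
  have hu := hasDerivAt_Phi_mul_sqrt_add_div_sqrt a b hx
  have hg := ((hasDerivAt_sqrt hx.ne').div_const a).mul
    ((hasDerivAt_phi _).comp x (hasDerivAt_mul_sqrt_add_div_sqrt a b hx))
  have hF := ((((hv.const_mul
      (1 / (2 * a ^ 2) * exp (-(a * |b|) - a * b) * (-(a * |b|) + a * b - 1))).add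
    ((hw.sub_const 1).const_mul
      (1 / (2 * a ^ 2) * exp (a * |b| - a * b) * (a * |b| + a * b - 1)))).add_const
    (|b| / (2 * a) * exp (-(a * |b|) - a * b))).add ((hasDerivAt_id x).mul hu)).add hg
  refine (hF.congr_of_eventuallyEq (Filter.Eventually.of_forall fun y => ?_)).congr_deriv ?_
  · simp only [Pi.add_apply, Pi.mul_apply, Function.comp_apply, id, phi]
    ring
  have hs : √x ≠ 0 := (sqrt_pos.2 hx).ne'
  have hxs : x = √x ^ 2 := (sq_sqrt hx.le).symm
  simp only [phi_mul_sub_abs_div a b hs, phi_mul_add_abs_div a b hs, Function.comp_apply, id]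
  generalize √x = s at hs hxs ⊢
  subst hxs
  generalize phi (a * s + b / s) = p
  field_simp
  linear_combination -2 * a * p * sq_abs b
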